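/- arXiv:1205.3762 — 2 statements merged into one kernel-verified Lean document; each statement's English description precedes it below -/
import Mathlib

section
/- Let X, Y, U be finite subsets of the nonnegative integers with #X = #Y, X and Y having the same sum of elements, and U disjoint from both X and Y. If X ⊴ Y (comparing the elements arranged in decreasing order in the dominance order), then U ∪ X ⊴ U ∪ Y. -/
/-- Decreasing enumeration of a multiset of natural numbers. -/
def dsort (M : Multiset ℕ) : List ℕ := (M.sort (· ≤ ·)).reverse

/-- Dominance order on multisets of naturals (of the same size and sum):
partial sums of the decreasing enumerations. -/
def MDom (M M' : Multiset ℕ) : Prop :=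
  ∀ d, ((dsort M).take d).sum ≤ ((dsort M').take d).sum

/-! The partial sums of a decreasing enumeration are maxima: `topSum k M` is the largest sum of a
sub-multiset of `M` with at most `k` elements. Such a sub-multiset of `P + M` splits into one of `P`
with `a` elements and one of `M` with `b` elements, `a + b ≤ k`; so `topSum k (P + M)` is the
maximum over `a + b ≤ k` of `topSum a P + topSum b M`, which is monotone in the top sums of `M`. -/

def topSum (k : ℕ) (M : Multiset ℕ) : ℕ := ((dsort M).take k).sum

theorem coe_dsort (M : Multiset ℕ) : (dsort M : Multiset ℕ) = M := by
  rw [dsort, Multiset.coe_reverse, Multiset.sort_eq]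

theorem pairwise_dsort (M : Multiset ℕ) : (dsort M).Pairwise (· ≥ ·) :=
  List.pairwise_reverse.2 (Multiset.pairwise_sort M (· ≤ ·))

theorem List.sum_le_sum_take_of_le {l : List ℕ} (hl : l.Pairwise (· ≥ ·)) {S : Multiset ℕ}
    {k : ℕ} (hS : S ≤ l) (hk : S.card ≤ k) : S.sum ≤ (l.take k).sum := by
  induction l generalizing S k with
  | nil => simp [Multiset.le_zero.1 hS]
  | cons a t ih =>
    rw [← Multiset.cons_coe] at hS
    obtain ⟨hat, ht⟩ := List.pairwise_cons.1 hl
    rcases S.empty_or_exists_mem with rfl | ⟨x, hx⟩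
    · simp
    obtain ⟨j, rfl⟩ : ∃ j, k = j + 1 :=
      Nat.exists_eq_add_one.2 (lt_of_lt_of_le (Multiset.card_pos_iff_exists_mem.2 ⟨x, hx⟩) hk)
    obtain ⟨s, S', rfl, hsa, hS'⟩ : ∃ s S', S = s ::ₘ S' ∧ s ≤ a ∧ S' ≤ t := by
      by_cases ha : a ∈ S
      · exact ⟨a, S.erase a, (Multiset.cons_erase ha).symm, le_rfl,
          Multiset.erase_le_iff_le_cons.2 hS⟩
      · have hSt : S ≤ t := (Multiset.le_cons_of_notMem ha).1 hS
        exact ⟨x, S.erase x, (Multiset.cons_erase hx).symm,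
          hat x (Multiset.mem_of_le hSt hx), (Multiset.erase_le x S).trans hSt⟩
    rw [Multiset.sum_cons, List.take_succ_cons, List.sum_cons]
    exact add_le_add hsa (ih ht hS' (by simpa using hk))

theorem sum_le_topSum {S M : Multiset ℕ} {k : ℕ} (hS : S ≤ M) (hk : S.card ≤ k) :
    S.sum ≤ topSum k M :=
  List.sum_le_sum_take_of_le (pairwise_dsort M) ((coe_dsort M).symm ▸ hS) hk

theorem exists_le_card_le_sum_eq_topSum (k : ℕ) (M : Multiset ℕ) :
    ∃ S ≤ M, S.card ≤ k ∧ S.sum = topSum k M := by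
  refine ⟨(dsort M).take k, ?_, by simp, Multiset.sum_coe _⟩
  simpa only [coe_dsort] using
    Multiset.coe_le.2 ((dsort M).take_sublist k).subperm

theorem topSum_add_topSum_le {a b k : ℕ} (hk : a + b ≤ k) (P M : Multiset ℕ) :
    topSum a P + topSum b M ≤ topSum k (P + M) := by
  obtain ⟨S, hSP, hSa, hS⟩ := exists_le_card_le_sum_eq_topSum a P
  obtain ⟨T, hTM, hTb, hT⟩ := exists_le_card_le_sum_eq_topSum b M
  rw [← hS, ← hT, ← Multiset.sum_add]
  exact sum_le_topSum (add_le_add hSP hTM) (by rw [Multiset.card_add]; omega)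

theorem exists_topSum_add_le (k : ℕ) (P M : Multiset ℕ) :
    ∃ a b, a + b ≤ k ∧ topSum k (P + M) ≤ topSum a P + topSum b M := by
  obtain ⟨S, hS, hSk, hSsum⟩ := exists_le_card_le_sum_eq_topSum k (P + M)
  refine ⟨(S ∩ P).card, (S - P).card, ?_, ?_⟩
  · rwa [← Multiset.card_add, add_comm, Multiset.sub_add_inter]
  · calc topSum k (P + M) = (S ∩ P).sum + (S - P).sum := by
          rw [← hSsum, ← Multiset.sum_add, add_comm, Multiset.sub_add_inter]
      _ ≤ _ := add_le_add (sum_le_topSum Multiset.inter_le_right le_rfl)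
          (sum_le_topSum (Multiset.sub_le_iff_le_add.2 (by rwa [add_comm])) le_rfl)

theorem MDom.add_left {M N : Multiset ℕ} (h : MDom M N) (P : Multiset ℕ) :
    MDom (P + M) (P + N) := by
  intro k
  obtain ⟨a, b, hab, hle⟩ := exists_topSum_add_le k P M
  calc topSum k (P + M) ≤ topSum a P + topSum b M := hle
    _ ≤ topSum a P + topSum b N := Nat.add_le_add_left (h b) _
    _ ≤ topSum k (P + N) := topSum_add_topSum_le hab P N

theorem dominance_union_disjoint_general (X Y U : Finset ℕ)
    (hUX : Disjoint U X) (hUY : Disjoint U Y)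
    (h : MDom X.val Y.val) :
    MDom (U ∪ X).val (U ∪ Y).val := by
  rw [← Finset.disjUnion_eq_union U X hUX, ← Finset.disjUnion_eq_union U Y hUY]
  exact h.add_left U.val

theorem dominance_union_disjoint (X Y U : Finset ℕ)
    (hcard : X.card = Y.card)
    (hsum : ∑ x ∈ X, x = ∑ y ∈ Y, y)
    (hUX : Disjoint U X) (hUY : Disjoint U Y)
    (h : MDom X.val Y.val) :
    MDom (U ∪ X).val (U ∪ Y).val :=
  dominance_union_disjoint_general X Y U hUX hUY h
end

section
/- Let Z = {u_1 ≥ … ≥ u_m} satisfy u_i − u_{i+2} ≥ a for all i, with a > 0, let δ_i ∈ {0,1} with exactly l ones, and let Z' be the decreasing rearrangement of {u_i + δ_i a}. Let Ẑ be the multiset obtained from Z by adding a to each of the l largest entries, i.e., Ẑ = {u_1+a, …, u_l+a, u_{l+1}, …, u_m}. Then Z' ⊴ Ẑ in the dominance order, and Σ_{i} (i−1)·(entries of Ẑ in decreasing order) = binom(l,2)·a + Σ_i (i−1)u_i. -/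
namespace List

variable {M : Type*} [AddCommMonoid M] [PartialOrder M] [IsOrderedAddMonoid M]
  [CanonicallyOrderedAdd M]

theorem sum_take_le_sum_take_cons {x : M} {u : List M} (hx : ∀ y ∈ u, y ≤ x) (k : ℕ) :
    (u.take k).sum ≤ ((x :: u).take k).sum := by
  cases k with
  | zero => simp
  | succ k =>
    rw [take_add_one, take_succ_cons, sum_append, sum_cons, add_comm x]
    gcongr
    cases h : u[k]? with
    | none => simp
    | some y => simpa using hx y (mem_of_getElem? h)

theorem Sublist.sum_le_sum_take {t u : List M} (h : t <+ u) (hu : u.Pairwise (· ≥ ·)) :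
    t.sum ≤ (u.take t.length).sum := by
  induction h with
  | slnil => simp
  | cons x _ ih =>
    obtain ⟨hx, hu⟩ := pairwise_cons.mp hu
    exact (ih hu).trans (sum_take_le_sum_take_cons hx _)
  | cons_cons x _ ih =>
    simp only [length_cons, take_succ_cons, sum_cons]
    gcongr
    exact ih (pairwise_cons.mp hu).2

theorem take_mapIdx {α β : Type*} (f : ℕ → α → β) (l : List α) (k : ℕ) :
    (l.mapIdx f).take k = (l.take k).mapIdx f := by
  apply ext_getElem <;> simp

end List

theorem exists_sublist_sum_take_dsort (L : List ℕ) (d : ℕ) :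
    ∃ t : List ℕ, t.Sublist L ∧ t.length ≤ d ∧ ((dsort ↑L).take d).sum = t.sum := by
  have hperm : (dsort ↑L).Perm L :=
    (List.reverse_perm _).trans (Multiset.coe_eq_coe.mp (Multiset.sort_eq _ _))
  obtain ⟨t, htp, ht⟩ := ((List.take_sublist d _).subperm).trans hperm.subperm
  exact ⟨t, ht, htp.length_eq ▸ List.length_take_le _ _, htp.sum_eq.symm⟩

/-- The paper's `Ẑ`, with `c = a` and `l` the number of ones among the `δ_i`. -/
def raisePrefix (c l : ℕ) (u : List ℕ) : List ℕ :=
  u.mapIdx fun i x => if i < l then x + c else x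

theorem raisePrefix_cons (c l x : ℕ) (u : List ℕ) :
    raisePrefix c (l + 1) (x :: u) = (x + c) :: raisePrefix c l u := by
  simp [raisePrefix]

theorem raisePrefix_zero (c : ℕ) (u : List ℕ) : raisePrefix c 0 u = u :=
  List.ext_getElem (by simp [raisePrefix]) (by simp [raisePrefix])

theorem take_raisePrefix (c l : ℕ) (u : List ℕ) (k : ℕ) :
    (raisePrefix c l u).take k = raisePrefix c l (u.take k) :=
  List.take_mapIdx _ _ _

theorem sum_raisePrefix (c l : ℕ) (u : List ℕ) :
    (raisePrefix c l u).sum = u.sum + c * min l u.length := by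
  induction u generalizing l with
  | nil => simp [raisePrefix]
  | cons x u ih =>
    cases l with
    | zero => simp [raisePrefix_zero]
    | succ l =>
      rw [raisePrefix_cons, List.sum_cons, ih, List.sum_cons, List.length_cons,
        show min (l + 1) (u.length + 1) = min l u.length + 1 by omega]
      ring

theorem getD_raisePrefix (c l : ℕ) {u : List ℕ} {i : ℕ} (hi : i < u.length) :
    (raisePrefix c l u).getD i 0 = u.getD i 0 + if i < l then c else 0 := by
  simp only [raisePrefix, List.getD_eq_getElem?_getD, List.getElem?_mapIdx,
    List.getElem?_eq_getElem hi, Option.map_some, Option.getD_some]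
  split_ifs <;> simp

theorem sum_range_mul_ite_lt (c : ℕ) {l n : ℕ} (hl : l ≤ n) :
    ∑ i ∈ Finset.range n, i * (if i < l then c else 0) = l.choose 2 * c := by
  simp only [mul_ite, mul_zero]
  rw [← Finset.sum_filter, Finset.range_eq_Ico, Finset.Ico_filter_lt, min_eq_right hl,
    ← Finset.range_eq_Ico, ← Finset.sum_mul, Finset.sum_range_id, Nat.choose_two_right]

theorem sum_range_mul_getD_raisePrefix (c : ℕ) {l : ℕ} {u : List ℕ} (hl : l ≤ u.length) :
    ∑ i ∈ Finset.range u.length, i * (raisePrefix c l u).getD i 0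
      = l.choose 2 * c + ∑ i ∈ Finset.range u.length, i * u.getD i 0 := by
  rw [Finset.sum_congr rfl fun i hi => by
      rw [getD_raisePrefix c l (Finset.mem_range.mp hi), mul_add],
    Finset.sum_add_distrib, sum_range_mul_ite_lt c hl, add_comm]

theorem sum_le_sum_take_raisePrefix_of_sublist_zipWith (c : ℕ) {u δ t : List ℕ}
    (hu : u.Pairwise (· ≥ ·)) (hlen : δ.length = u.length) (hδ : ∀ y ∈ δ, y ≤ 1)
    (ht : t.Sublist (List.zipWith (fun x y => x + y * c) u δ)) :
    t.sum ≤ ((raisePrefix c δ.sum u).take t.length).sum := by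
  rw [← List.map_uncurry_zip_eq_zipWith, List.sublist_map_iff] at ht
  obtain ⟨p, hp, rfl⟩ := ht
  have hfst : (p.map Prod.fst).Sublist u := List.map_fst_zip hlen.ge ▸ hp.map Prod.fst
  have hsnd : (p.map Prod.snd).Sublist δ := List.map_snd_zip hlen.le ▸ hp.map Prod.snd
  have hsnd_le : (p.map Prod.snd).sum ≤ min δ.sum (u.take p.length).length := by
    have h_one := List.sum_le_card_nsmul _ 1 fun y hy => hδ y (hsnd.subset hy)
    have h_len := hfst.length_le
    have h_δ := hsnd.sum_le_sum fun y _ => Nat.zero_le y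
    simp only [List.length_map, smul_eq_mul, mul_one] at h_one h_len
    simp only [List.length_take]
    omega
  have hsum : (p.map (Function.uncurry fun x y => x + y * c)).sum
      = (p.map Prod.fst).sum + c * (p.map Prod.snd).sum := by
    simp only [Function.uncurry_def, List.sum_map_add, List.sum_map_mul_right]
    ring
  rw [hsum, List.length_map, take_raisePrefix, sum_raisePrefix]
  gcongr
  simpa using hfst.sum_le_sum_take hu

theorem pieri_dominance_and_weighted_sum_general (a lnum : ℕ)
    (u δ : List ℕ)
    (hu : List.Pairwise (· ≥ ·) u)
    (hδlen : δ.length = u.length) (hδ : ∀ x ∈ δ, x ≤ 1) (hδsum : δ.sum = lnum) :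
    (∀ d,
      ((dsort (↑(List.zipWith (fun x y => x + y * a) u δ) : Multiset ℕ)).take d).sum
        ≤ (((u.mapIdx fun i x => if i < lnum then x + a else x).take d).sum)) ∧
    (∑ i ∈ Finset.range u.length,
        i * (u.mapIdx fun i x => if i < lnum then x + a else x).getD i 0
      = Nat.choose lnum 2 * a + ∑ i ∈ Finset.range u.length, i * u.getD i 0) := by
  change (∀ d, _ ≤ ((raisePrefix a lnum u).take d).sum) ∧
    ∑ i ∈ Finset.range u.length, i * (raisePrefix a lnum u).getD i 0 = _
  subst hδsum
  have hl : δ.sum ≤ u.length := by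
    simpa [hδlen] using List.sum_le_card_nsmul δ 1 hδ
  refine ⟨fun d => ?_, sum_range_mul_getD_raisePrefix a hl⟩
  obtain ⟨t, ht, htd, hsum⟩ := exists_sublist_sum_take_dsort _ d
  calc ((dsort _).take d).sum = t.sum := hsum
    _ ≤ ((raisePrefix a δ.sum u).take t.length).sum :=
      sum_le_sum_take_raisePrefix_of_sublist_zipWith a hu hδlen hδ ht
    _ ≤ ((raisePrefix a δ.sum u).take d).sum := List.monotone_sum_take _ htd

theorem pieri_dominance_and_weighted_sum (a lnum : ℕ) (ha : 0 < a)
    (u δ : List ℕ)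
    (hu : List.Pairwise (· ≥ ·) u)
    (hgap : ∀ i, i + 2 < u.length → u.getD (i + 2) 0 + a ≤ u.getD i 0)
    (hδlen : δ.length = u.length) (hδ : ∀ x ∈ δ, x ≤ 1) (hδsum : δ.sum = lnum) :
    (∀ d,
      ((dsort (↑(List.zipWith (fun x y => x + y * a) u δ) : Multiset ℕ)).take d).sum
        ≤ (((u.mapIdx fun i x => if i < lnum then x + a else x).take d).sum)) ∧
    (∑ i ∈ Finset.range u.length,
        i * (u.mapIdx fun i x => if i < lnum then x + a else x).getD i 0
      = Nat.choose lnum 2 * a + ∑ i ∈ Finset.range u.length, i * u.getD i 0) :=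
  pieri_dominance_and_weighted_sum_general a lnum u δ hu hδlen hδ hδsum
end
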